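/- arXiv:2204.11132 — 6 statements merged into one kernel-verified Lean document; each statement's English description precedes it below -/
import Mathlib

section
/- If f, g are arc length parameterizations of arcs of a regular plane curve with nonvanishing curvature near points a = f(s0), b = g(t0) satisfying f'(s0) = -g'(t0), then there exists a smooth function t(s) defined near s0 with t(s0) = t0 such that f'(s) = -g'(t(s)) for all s near s0, and t'(s) = κ_f(s)/κ_g(t(s)). -/
open Real Set

/-- Rotation by π/2. -/
noncomputable def J (v : ℝ × ℝ) : ℝ × ℝ := (-v.2, v.1)

/-- Euclidean norm on the plane. -/
noncomputable def norm2 (v : ℝ × ℝ) : ℝ := Real.sqrt (v.1 ^ 2 + v.2 ^ 2)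

/-- An explicit continuous linear equivalence of the plane. -/
noncomputable def mkCLE (A C : ℝ) (hC : C ≠ 0) : (ℝ × ℝ) ≃L[ℝ] (ℝ × ℝ) :=
{ toLinearEquiv :=
  { toFun := fun p => (p.1, A * p.1 + C * p.2)
    invFun := fun q => (q.1, (q.2 - A * q.1) / C)
    map_add' := fun p q => by
      refine Prod.ext rfl ?_
      simp only [Prod.fst_add, Prod.snd_add]
      ring
    map_smul' := fun c p => by
      refine Prod.ext rfl ?_
      simp only [Prod.smul_fst, Prod.smul_snd, smul_eq_mul, RingHom.id_apply]
      ring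
    left_inv := fun p => by
      refine Prod.ext rfl ?_
      field_simp
      ring
    right_inv := fun q => by
      refine Prod.ext rfl ?_
      field_simp
      ring }
  continuous_toFun := by fun_prop
  continuous_invFun := by fun_prop }

/-- Cancellation along `J w` for a unit vector `w`. -/
lemma Jcancel (x y : ℝ) (w : ℝ × ℝ) (hw : w.1 ^ 2 + w.2 ^ 2 = 1)
    (h : x • J w = y • J w) : x = y := by
  have e1 : x * (-w.2) = y * (-w.2) := congrArg Prod.fst h
  have e2 : x * w.1 = y * w.1 := congrArg Prod.snd h
  have t1 : (x - y) * w.2 = 0 := by linear_combination -e1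
  have t2 : (x - y) * w.1 = 0 := by linear_combination e2
  linear_combination (y - x) * hw + w.1 * t2 + w.2 * t1

/-- Two unit plane vectors with vanishing cross product and negative dot product are opposite. -/
lemma opp_vec (a b p q : ℝ) (h1 : a ^ 2 + b ^ 2 = 1) (h2 : p ^ 2 + q ^ 2 = 1)
    (hc : a * q - b * p = 0) (hd : a * p + b * q < 0) : a = -p ∧ b = -q := by
  have hd2 : (a * p + b * q) ^ 2 = 1 := by
    linear_combination (p ^ 2 + q ^ 2) * h1 + h2 - (a * q - b * p) * hc
  have hdm1 : a * p + b * q = -1 := by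
    have hz : (a * p + b * q + 1) * (a * p + b * q - 1) = 0 := by linear_combination hd2
    rcases mul_eq_zero.mp hz with h | h
    · linarith
    · linarith
  have hs0 : (a + p) ^ 2 + (b + q) ^ 2 = 0 := by linear_combination h1 + h2 + 2 * hdm1
  have h5 : (a + p) ^ 2 = 0 :=
    le_antisymm (by nlinarith [sq_nonneg (b + q)]) (sq_nonneg _)
  have h6 : (b + q) ^ 2 = 0 :=
    le_antisymm (by nlinarith [sq_nonneg (a + p)]) (sq_nonneg _)
  constructor
  · have := pow_eq_zero_iff (n := 2) (by norm_num) |>.mp h5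
    linarith
  · have := pow_eq_zero_iff (n := 2) (by norm_num) |>.mp h6
    linarith

/-- If `f`, `g` are smooth unit-speed plane curves with signed curvatures `κf`, `κg`
(structural equation `f'' = κf • J f'`), `κg t0 ≠ 0` and `f'(s0) = -g'(t0)`, then there is
a smooth function `t` near `s0` with `t s0 = t0`, `f'(s) = -g'(t s)` and
`t'(s) = κf s / κg (t s)` for all `s` near `s0`. -/
theorem stmt0 (f g : ℝ → ℝ × ℝ) (κf κg : ℝ → ℝ) (s0 t0 : ℝ)
    (hf : ContDiff ℝ (⊤ : ℕ∞) f) (hg : ContDiff ℝ (⊤ : ℕ∞) g)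
    (hκf : ContDiff ℝ (⊤ : ℕ∞) κf) (hκg : ContDiff ℝ (⊤ : ℕ∞) κg)
    (hfu : ∀ s, norm2 (deriv f s) = 1) (hgu : ∀ u, norm2 (deriv g u) = 1)
    (hfc : ∀ s, deriv (deriv f) s = κf s • J (deriv f s))
    (hgc : ∀ u, deriv (deriv g) u = κg u • J (deriv g u))
    (hκg0 : κg t0 ≠ 0) (hpar : deriv f s0 = - deriv g t0) :
    ∃ t : ℝ → ℝ, ContDiffAt ℝ (⊤ : ℕ∞) t s0 ∧ t s0 = t0 ∧
      ∀ᶠ s in nhds s0, deriv f s = - deriv g (t s) ∧ deriv t s = κf s / κg (t s) := by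
  set u := deriv f with hu_def
  set v := deriv g with hv_def
  -- smoothness of the derivatives
  have hu : ContDiff ℝ (⊤ : ℕ∞) u := by
    have h1 : ContDiff ℝ (((⊤ : ℕ∞) : WithTop ℕ∞) + 1) f := by exact hf
    exact (contDiff_succ_iff_deriv.mp h1).2.2
  have hv : ContDiff ℝ (⊤ : ℕ∞) v := by
    have h1 : ContDiff ℝ (((⊤ : ℕ∞) : WithTop ℕ∞) + 1) g := by exact hg
    exact (contDiff_succ_iff_deriv.mp h1).2.2
  -- unit speed, squared
  have hfu2 : ∀ s, (u s).1 ^ 2 + (u s).2 ^ 2 = 1 := fun s =>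
    Real.sqrt_eq_one.mp (hfu s)
  have hgu2 : ∀ s, (v s).1 ^ 2 + (v s).2 ^ 2 = 1 := fun s =>
    Real.sqrt_eq_one.mp (hgu s)
  -- structural equations as HasDerivAt
  have hu' : ∀ s, HasDerivAt u (κf s • J (u s)) s := fun s => by
    rw [← hfc s]; exact (hu.differentiable (by simp) s).hasDerivAt
  have hv' : ∀ s, HasDerivAt v (κg s • J (v s)) s := fun s => by
    rw [← hgc s]; exact (hv.differentiable (by simp) s).hasDerivAt
  have hv0 : v t0 = - u s0 := by rw [hpar]; simp
  -- the cross-product function and the auxiliary map Φ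
  set F : ℝ × ℝ → ℝ := fun p => (u p.1).1 * (v p.2).2 - (u p.1).2 * (v p.2).1 with hF_def
  set Φ : ℝ × ℝ → ℝ × ℝ := fun p => (p.1, F p) with hΦ_def
  have hFcd : ContDiff ℝ (⊤ : ℕ∞) F := by
    apply ContDiff.sub
    · exact ((contDiff_fst.comp (hu.comp contDiff_fst)).mul
        (contDiff_snd.comp (hv.comp contDiff_snd)))
    · exact ((contDiff_snd.comp (hu.comp contDiff_fst)).mul
        (contDiff_fst.comp (hv.comp contDiff_snd)))
  have hΦcd : ContDiffAt ℝ (⊤ : ℕ∞) Φ (s0, t0) :=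
    (contDiff_fst.prodMk hFcd).contDiffAt
  -- the derivative of Φ at (s0,t0)
  set A : ℝ := (κf s0 • J (u s0)).1 * (v t0).2 - (κf s0 • J (u s0)).2 * (v t0).1 with hA_def
  set C : ℝ := (u s0).1 * (κg t0 • J (v t0)).2 - (u s0).2 * (κg t0 • J (v t0)).1 with hC_def
  have hCval : C = - κg t0 := by
    rw [hC_def, hv0]
    simp only [J, Prod.fst_neg, Prod.snd_neg, Prod.smul_fst, Prod.smul_snd, smul_eq_mul,
      neg_neg]
    linear_combination (- κg t0) * hfu2 s0
  have hC : C ≠ 0 := by rw [hCval]; exact neg_ne_zero.mpr hκg0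
  set L : (ℝ × ℝ) ≃L[ℝ] (ℝ × ℝ) := mkCLE A C hC with hL_def
  -- HasFDerivAt for F
  have hu1 : HasDerivAt (fun s => (u s).1) (κf s0 • J (u s0)).1 s0 := by
    have := (ContinuousLinearMap.fst ℝ ℝ ℝ).hasFDerivAt.comp_hasDerivAt s0 (hu' s0)
    exact this
  have hu2 : HasDerivAt (fun s => (u s).2) (κf s0 • J (u s0)).2 s0 := by
    have := (ContinuousLinearMap.snd ℝ ℝ ℝ).hasFDerivAt.comp_hasDerivAt s0 (hu' s0)
    exact this
  have hv1 : HasDerivAt (fun s => (v s).1) (κg t0 • J (v t0)).1 t0 := by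
    have := (ContinuousLinearMap.fst ℝ ℝ ℝ).hasFDerivAt.comp_hasDerivAt t0 (hv' t0)
    exact this
  have hv2 : HasDerivAt (fun s => (v s).2) (κg t0 • J (v t0)).2 t0 := by
    have := (ContinuousLinearMap.snd ℝ ℝ ℝ).hasFDerivAt.comp_hasDerivAt t0 (hv' t0)
    exact this
  have hP1 : HasFDerivAt (fun p : ℝ × ℝ => (u p.1).1)
      ((κf s0 • J (u s0)).1 • ContinuousLinearMap.fst ℝ ℝ ℝ) (s0, t0) :=
    by
      have hfst : HasFDerivAt (@Prod.fst ℝ ℝ) (ContinuousLinearMap.fst ℝ ℝ ℝ) (s0, t0) :=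
        hasFDerivAt_fst
      exact HasDerivAt.comp_hasFDerivAt _ hu1 hfst
  have hP2 : HasFDerivAt (fun p : ℝ × ℝ => (u p.1).2)
      ((κf s0 • J (u s0)).2 • ContinuousLinearMap.fst ℝ ℝ ℝ) (s0, t0) :=
    by
      have hfst : HasFDerivAt (@Prod.fst ℝ ℝ) (ContinuousLinearMap.fst ℝ ℝ ℝ) (s0, t0) :=
        hasFDerivAt_fst
      exact HasDerivAt.comp_hasFDerivAt _ hu2 hfst
  have hQ1 : HasFDerivAt (fun p : ℝ × ℝ => (v p.2).1)
      ((κg t0 • J (v t0)).1 • ContinuousLinearMap.snd ℝ ℝ ℝ) (s0, t0) :=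
    by
      have hsnd : HasFDerivAt (@Prod.snd ℝ ℝ) (ContinuousLinearMap.snd ℝ ℝ ℝ) (s0, t0) :=
        hasFDerivAt_snd
      exact HasDerivAt.comp_hasFDerivAt _ hv1 hsnd
  have hQ2 : HasFDerivAt (fun p : ℝ × ℝ => (v p.2).2)
      ((κg t0 • J (v t0)).2 • ContinuousLinearMap.snd ℝ ℝ ℝ) (s0, t0) :=
    by
      have hsnd : HasFDerivAt (@Prod.snd ℝ ℝ) (ContinuousLinearMap.snd ℝ ℝ ℝ) (s0, t0) :=
        hasFDerivAt_snd
      exact HasDerivAt.comp_hasFDerivAt _ hv2 hsnd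
  have hFd : HasFDerivAt F
      (((u s0).1 • ((κg t0 • J (v t0)).2 • ContinuousLinearMap.snd ℝ ℝ ℝ) +
        (v t0).2 • ((κf s0 • J (u s0)).1 • ContinuousLinearMap.fst ℝ ℝ ℝ)) -
       ((u s0).2 • ((κg t0 • J (v t0)).1 • ContinuousLinearMap.snd ℝ ℝ ℝ) +
        (v t0).1 • ((κf s0 • J (u s0)).2 • ContinuousLinearMap.fst ℝ ℝ ℝ))) (s0, t0) :=
    (hP1.mul hQ2).sub (hP2.mul hQ1)
  have hΦd : HasFDerivAt Φ (L : (ℝ × ℝ) →L[ℝ] (ℝ × ℝ)) (s0, t0) := by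
    have hraw := hasFDerivAt_fst.prodMk hFd
    refine hraw.congr_fderiv ?_
    apply ContinuousLinearMap.ext
    intro p
    have hLp : (L : (ℝ × ℝ) →L[ℝ] (ℝ × ℝ)) p = (p.1, A * p.1 + C * p.2) := rfl
    rw [hLp]
    refine Prod.ext rfl ?_
    simp only [ContinuousLinearMap.prod_apply, ContinuousLinearMap.coe_fst',
      ContinuousLinearMap.coe_sub', ContinuousLinearMap.coe_add', Pi.sub_apply, Pi.add_apply,
      ContinuousLinearMap.coe_smul', Pi.smul_apply, ContinuousLinearMap.coe_snd',
      smul_eq_mul, hA_def, hC_def, J, Prod.smul_fst, Prod.smul_snd]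
    ring
  -- local inverse
  have hΦ0 : Φ (s0, t0) = (s0, 0) := by
    refine Prod.ext rfl ?_
    simp only [hΦ_def, hF_def]
    rw [hv0]
    simp only [Prod.fst_neg, Prod.snd_neg]
    ring
  have hS : HasStrictFDerivAt Φ (L : (ℝ × ℝ) →L[ℝ] (ℝ × ℝ)) (s0, t0) :=
    hΦcd.hasStrictFDerivAt' hΦd (by simp)
  set Finv : ℝ × ℝ → ℝ × ℝ := hS.localInverse Φ L (s0, t0) with hFinv_def
  have hinv_cd : ContDiffAt ℝ (⊤ : ℕ∞) Finv (s0, 0) := by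
    have := hΦcd.to_localInverse hΦd (by simp)
    rw [hΦ0] at this
    exact this
  set t : ℝ → ℝ := fun s => (Finv (s, 0)).2 with ht_def
  have hts : ContDiffAt ℝ (⊤ : ℕ∞) t s0 := by
    have hmap : ContDiffAt ℝ (⊤ : ℕ∞) (fun s : ℝ => ((s : ℝ), (0 : ℝ))) s0 :=
      (contDiff_id.prodMk contDiff_const).contDiffAt
    exact contDiffAt_snd.comp s0 (hinv_cd.comp s0 hmap)
  have ht0 : t s0 = t0 := by
    have := hS.localInverse_apply_image
    rw [hΦ0] at this
    rw [ht_def]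
    simp only [← hFinv_def] at this ⊢
    rw [this]
  -- eventual right inverse pulled back
  have hmap0 : Filter.Tendsto (fun s : ℝ => ((s : ℝ), (0 : ℝ))) (nhds s0) (nhds (s0, 0)) :=
    (Continuous.prodMk continuous_id continuous_const).continuousAt
  have hri : ∀ᶠ s in nhds s0, Φ (Finv (s, 0)) = (s, 0) := by
    have := hS.eventually_right_inverse
    rw [hΦ0] at this
    exact hmap0.eventually this
  have hkey : ∀ᶠ s in nhds s0, Finv (s, 0) = (s, t s) ∧ F (s, t s) = 0 := by
    filter_upwards [hri] with s hs
    have h1 : (Finv (s, 0)).1 = s := congrArg Prod.fst hs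
    have heq : Finv (s, 0) = (s, t s) := by
      rw [ht_def]; exact Prod.ext h1 rfl
    refine ⟨heq, ?_⟩
    have h2 : F (Finv (s, 0)) = 0 := congrArg Prod.snd hs
    rwa [heq] at h2
  -- parallelism gives anti-alignment
  have hvtc : ContinuousAt (fun s => v (t s)) s0 :=
    (hv.continuous.continuousAt).comp hts.continuousAt
  have hdot : ContinuousAt
      (fun s => (u s).1 * (v (t s)).1 + (u s).2 * (v (t s)).2) s0 := by
    have hu1c : ContinuousAt (fun s => (u s).1) s0 :=
      (continuous_fst.comp hu.continuous).continuousAt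
    have hu2c : ContinuousAt (fun s => (u s).2) s0 :=
      (continuous_snd.comp hu.continuous).continuousAt
    have hv1c : ContinuousAt (fun s => (v (t s)).1) s0 :=
      (continuous_fst.continuousAt).comp hvtc
    have hv2c : ContinuousAt (fun s => (v (t s)).2) s0 :=
      (continuous_snd.continuousAt).comp hvtc
    exact (hu1c.mul hv1c).add (hu2c.mul hv2c)
  have hdot0 : (u s0).1 * (v (t s0)).1 + (u s0).2 * (v (t s0)).2 = -1 := by
    rw [ht0, hv0]
    simp only [Prod.fst_neg, Prod.snd_neg]
    linear_combination - hfu2 s0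
  have hdneg : ∀ᶠ s in nhds s0,
      (u s).1 * (v (t s)).1 + (u s).2 * (v (t s)).2 < 0 := by
    have : Set.Iio (0 : ℝ) ∈ nhds ((u s0).1 * (v (t s0)).1 + (u s0).2 * (v (t s0)).2) := by
      rw [hdot0]; exact Iio_mem_nhds (by norm_num)
    exact hdot this
  have hanti : ∀ᶠ s in nhds s0, u s = - v (t s) := by
    filter_upwards [hkey, hdneg] with s hs hd
    have hcross : (u s).1 * (v (t s)).2 - (u s).2 * (v (t s)).1 = 0 := hs.2
    obtain ⟨e1, e2⟩ := opp_vec (u s).1 (u s).2 (v (t s)).1 (v (t s)).2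
      (hfu2 s) (hgu2 (t s)) hcross hd
    exact Prod.ext e1 e2
  -- κg ∘ t nonzero near s0
  have hκgt : ∀ᶠ s in nhds s0, κg (t s) ≠ 0 := by
    have hc : ContinuousAt (fun s => κg (t s)) s0 :=
      (hκg.continuous.continuousAt).comp hts.continuousAt
    have : κg (t s0) ≠ 0 := by rw [ht0]; exact hκg0
    exact hc.eventually_ne this
  -- t is smooth near s0
  have htev : ∀ᶠ s in nhds s0, ContDiffAt ℝ 1 t s := by
    apply (hts.of_le (by simp)).eventually
    simp
  refine ⟨t, hts, ht0, ?_⟩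
  filter_upwards [hanti, hanti.eventually_nhds, hκgt, htev] with s hs hsev hk hts'
  constructor
  · exact hs
  · -- differentiate the identity u = -(v ∘ t)
    have hdt : HasDerivAt t (deriv t s) s :=
      (hts'.differentiableAt (by simp)).hasDerivAt
    have hvd : HasDerivAt v (κg (t s) • J (v (t s))) (t s) := hv' (t s)
    have hcomp : HasDerivAt (fun x => v (t x))
        (deriv t s • κg (t s) • J (v (t s))) s := hvd.scomp s hdt
    have hneg : HasDerivAt (fun x => - v (t x))
        (- (deriv t s • κg (t s) • J (v (t s)))) s := hcomp.neg
    have hU2 : HasDerivAt u (- (deriv t s • κg (t s) • J (v (t s)))) s := by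
      apply hneg.congr_of_eventuallyEq
      filter_upwards [hsev] with x hx using hx
    have hU1 : HasDerivAt u (κf s • J (u s)) s := hu' s
    have heq := hU1.unique hU2
    have hvs : v (t s) = - u s := by rw [hs]; simp
    have hJneg : J (- u s) = - J (u s) := by simp [J]
    rw [hvs, hJneg] at heq
    simp only [smul_neg, neg_neg, smul_smul] at heq
    have hkey2 : κf s = deriv t s * κg (t s) :=
      Jcancel _ _ _ (hfu2 s) heq
    rw [eq_div_iff hk]
    linarith [hkey2]
end

section
/- Let f, g be local arc length parameterizations of a curve at a standard parallel pair (so f'(s) = -g'(t(s)) with t'(s) = κ_f(s)/κ_g(t(s)) and κ_g ≠ 0). If κ_f(s) + κ_g(t(s)) ≠ 0, then the envelope point of the family of chords ℓ_s(u) = f(s) + u(g(t(s)) - f(s)) is given by γ(s) = (κ_f(s)·f(s) + κ_g(t(s))·g(t(s))) / (κ_f(s) + κ_g(t(s))). -/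
open Real Set

/-- Planar determinant of two vectors. -/
noncomputable def det2 (u v : ℝ × ℝ) : ℝ := u.1 * v.2 - u.2 * v.1

/-- At a standard parallel pair, if `κf s + κg (t s) ≠ 0` then the envelope point of the
family of chords `ℓ_s(u) = f s + u • (g (t s) - f s)` is
`(κf s • f s + κg (t s) • g (t s)) / (κf s + κg (t s))`: this point lies on the chord at the
parameter `u₀ = κg (t s)/(κf s + κg (t s))`, and the variation of the family at this
parameter is tangent to the chord (envelope condition). -/
theorem stmt1 (f g : ℝ → ℝ × ℝ) (κf κg t : ℝ → ℝ)
    (hf : ContDiff ℝ (⊤ : ℕ∞) f) (hg : ContDiff ℝ (⊤ : ℕ∞) g) (ht : ContDiff ℝ (⊤ : ℕ∞) t)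
    (hfu : ∀ s, norm2 (deriv f s) = 1) (hgu : ∀ u, norm2 (deriv g u) = 1)
    (hfc : ∀ s, deriv (deriv f) s = κf s • J (deriv f s))
    (hgc : ∀ u, deriv (deriv g) u = κg u • J (deriv g u))
    (hpar : ∀ s, deriv f s = - deriv g (t s))
    (ht' : ∀ s, deriv t s = κf s / κg (t s))
    (hκg0 : ∀ s, κg (t s) ≠ 0)
    (s : ℝ) (hsum : κf s + κg (t s) ≠ 0) :
    f s + (κg (t s) / (κf s + κg (t s))) • (g (t s) - f s)
      = (κf s + κg (t s))⁻¹ • (κf s • f s + κg (t s) • g (t s)) ∧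
    det2 (deriv (fun σ => f σ + (κg (t s) / (κf s + κg (t s))) • (g (t σ) - f σ)) s)
      (g (t s) - f s) = 0 := by
  constructor
  · have h1 : (1 : ℝ) - κg (t s) / (κf s + κg (t s)) = κf s / (κf s + κg (t s)) := by
      field_simp
      ring
    ext <;> simp [Prod.smul_def, Prod.ext_iff, smul_sub, sub_smul, add_smul, smul_smul] <;>
      field_simp <;> ring
  · have hgd : HasDerivAt g (deriv g (t s)) (t s) :=
      (hg.differentiable (by simp) (t s)).hasDerivAt
    have htd : HasDerivAt t (deriv t s) s := (ht.differentiable (by simp) s).hasDerivAt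
    have hfd : HasDerivAt f (deriv f s) s := (hf.differentiable (by simp) s).hasDerivAt
    have hgt : HasDerivAt (fun σ => g (t σ)) (deriv t s • deriv g (t s)) s :=
      hgd.scomp s htd
    have hD : HasDerivAt (fun σ => f σ + (κg (t s) / (κf s + κg (t s))) • (g (t σ) - f σ))
        (deriv f s + (κg (t s) / (κf s + κg (t s))) •
          (deriv t s • deriv g (t s) - deriv f s)) s :=
      hfd.add (by have := (hgt.sub hfd).const_smul (κg (t s) / (κf s + κg (t s))); exact this)
    have hval : deriv f s + (κg (t s) / (κf s + κg (t s))) •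
        (deriv t s • deriv g (t s) - deriv f s) = 0 := by
      rw [ht' s, hpar s]
      have hc : κg (t s) / (κf s + κg (t s)) * (κf s / κg (t s) + 1) = 1 := by
        field_simp
        rw [mul_comm, add_mul, one_mul, div_mul_cancel₀ _ (hκg0 s)]
      have h2 : (κf s / κg (t s)) • deriv g (t s) - -deriv g (t s)
          = (κf s / κg (t s) + 1) • deriv g (t s) := by
        rw [sub_neg_eq_add, add_smul, one_smul]
      rw [h2, smul_smul, hc, one_smul, neg_add_cancel]
    rw [hD.deriv, hval]
    simp [det2]
end

section
/- With the natural local parameterization γ(s) = (κ_f(s)·f(s) + κ_g(t(s))·g(t(s))) / (κ_f(s) + κ_g(t(s))) of the Centre Symmetry Set at a standard pair, γ'(s) = 0 if and only if (κ_f(s)/κ_g(t(s)))' = 0, equivalently κ_f'(s)·κ_g(t(s))² = κ_g'(t(s))·κ_f(s)². -/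
open Real Set

/-- With the natural local parameterization
`γ s = (κf s • f s + κg (t s) • g (t s)) / (κf s + κg (t s))` of the Centre Symmetry Set at a
standard pair, `γ' s0 = 0` iff `(κf/κg∘t)'(s0) = 0`, which in turn holds iff
`κf'(s0)·κg(t s0)² = κg'(t s0)·κf(s0)²`. -/
theorem stmt2 (f g : ℝ → ℝ × ℝ) (κf κg t : ℝ → ℝ) (γ : ℝ → ℝ × ℝ)
    (hf : ContDiff ℝ (⊤ : ℕ∞) f) (hg : ContDiff ℝ (⊤ : ℕ∞) g) (ht : ContDiff ℝ (⊤ : ℕ∞) t)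
    (hκfs : ContDiff ℝ (⊤ : ℕ∞) κf) (hκgs : ContDiff ℝ (⊤ : ℕ∞) κg)
    (hfu : ∀ s, norm2 (deriv f s) = 1) (hgu : ∀ u, norm2 (deriv g u) = 1)
    (hfc : ∀ s, deriv (deriv f) s = κf s • J (deriv f s))
    (hgc : ∀ u, deriv (deriv g) u = κg u • J (deriv g u))
    (hpar : ∀ s, deriv f s = - deriv g (t s))
    (ht' : ∀ s, deriv t s = κf s / κg (t s))
    (hκg0 : ∀ s, κg (t s) ≠ 0)
    (hsum : ∀ s, κf s + κg (t s) ≠ 0)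
    (hchord : ∀ s, f s ≠ g (t s))
    (hγ : ∀ s, γ s = (κf s + κg (t s))⁻¹ • (κf s • f s + κg (t s) • g (t s)))
    (s0 : ℝ) :
    (deriv γ s0 = 0 ↔ deriv (fun s => κf s / κg (t s)) s0 = 0) ∧
    (deriv (fun s => κf s / κg (t s)) s0 = 0 ↔
      deriv κf s0 * (κg (t s0)) ^ 2 = deriv κg (t s0) * (κf s0) ^ 2) := by
  have hB0 : κg (t s0) ≠ 0 := hκg0 s0
  have hD0 : κf s0 + κg (t s0) ≠ 0 := hsum s0
  set A := κf s0 with hA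
  set B := κg (t s0) with hB
  set A' := deriv κf s0 with hA'
  set Bg := deriv κg (t s0) with hBg
  have hκf : HasDerivAt κf A' s0 := (hκfs.differentiable (by simp) s0).hasDerivAt
  have htd : HasDerivAt t (A / B) s0 := by
    have h := (ht.differentiable (by simp) s0).hasDerivAt
    rwa [ht' s0] at h
  have hbd : HasDerivAt (fun s => κg (t s)) (Bg * (A / B)) s0 :=
    ((hκgs.differentiable (by simp) (t s0)).hasDerivAt).comp s0 htd
  have hfd : HasDerivAt f (deriv f s0) s0 := (hf.differentiable (by simp) s0).hasDerivAt
  have hGd : HasDerivAt (fun s => g (t s)) ((A / B) • deriv g (t s0)) s0 :=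
    ((hg.differentiable (by simp) (t s0)).hasDerivAt).scomp s0 htd
  have hgf : deriv g (t s0) = - deriv f s0 := by
    have := hpar s0; rw [this]; ring
  -- derivative of the quotient
  have hq : HasDerivAt (fun s => κf s / κg (t s))
      ((A' * B - A * (Bg * (A / B))) / B ^ 2) s0 := hκf.div hbd hB0
  have hqd : deriv (fun s => κf s / κg (t s)) s0 = (A' * B - A * (Bg * (A / B))) / B ^ 2 :=
    hq.deriv
  -- derivative of γ
  have hN : HasDerivAt (fun s => κf s • f s + κg (t s) • g (t s))
      ((A • deriv f s0 + A' • f s0) + (B • ((A / B) • deriv g (t s0)) + (Bg * (A / B)) • g (t s0)))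
      s0 := (hκf.smul hfd).add (hbd.smul hGd)
  have hinv : HasDerivAt (fun s => (κf s + κg (t s))⁻¹)
      (-(A' + Bg * (A / B)) / (A + B) ^ 2) s0 := (hκf.add hbd).inv hD0
  have hγd : HasDerivAt γ
      ((A + B)⁻¹ • ((A • deriv f s0 + A' • f s0) +
        (B • ((A / B) • deriv g (t s0)) + (Bg * (A / B)) • g (t s0))) +
       (-(A' + Bg * (A / B)) / (A + B) ^ 2) • (A • f s0 + B • g (t s0))) s0 := by
    have h := hinv.smul hN
    have hfun : γ = fun s => (κf s + κg (t s))⁻¹ • (κf s • f s + κg (t s) • g (t s)) :=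
      funext hγ
    rw [hfun]
    exact h
  set C : ℝ := (A' * B - A * (Bg * (A / B))) / (A + B) ^ 2 with hC
  have hE : deriv γ s0 = C • (f s0 - g (t s0)) := by
    rw [hγd.deriv, hgf]
    obtain ⟨F1, F2⟩ := deriv f s0
    obtain ⟨P1, P2⟩ := f s0
    obtain ⟨Q1, Q2⟩ := g (t s0)
    refine Prod.ext ?_ ?_ <;>
      simp only [Prod.smul_mk, Prod.mk_add_mk, Prod.neg_mk, Prod.mk_sub_mk, smul_eq_mul, hC] <;>
      field_simp <;> ring
  have hv : f s0 - g (t s0) ≠ 0 := sub_ne_zero.mpr (hchord s0)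
  constructor
  · rw [hE, hqd, smul_eq_zero, or_iff_left hv, hC, div_eq_zero_iff, div_eq_zero_iff]
    have h1 : (A + B) ^ 2 ≠ 0 := pow_ne_zero 2 hD0
    have h2 : (B : ℝ) ^ 2 ≠ 0 := pow_ne_zero 2 hB0
    tauto
  · rw [hqd, div_eq_zero_iff, or_iff_left (pow_ne_zero 2 hB0), sub_eq_zero]
    constructor
    · intro h
      field_simp at h ⊢
      nlinarith [h]
    · intro h
      field_simp
      nlinarith [h]
end

section
/- Under the hypotheses of the CSS local parameterization, a singular point γ(s0) of γ (i.e. γ'(s0) = 0) is an ordinary cusp (locally diffeomorphic to t ↦ (t², t³)) if and only if det(f(s0) - g(t(s0)), f'(s0)) ≠ 0 and (κ_f/κ_g∘t)''(s0) ≠ 0, the latter being equivalent to κ_f''(s0)·κ_g(t(s0))³ ≠ κ_g''(t(s0))·κ_f(s0)³ given the first-order condition. -/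
open Real Set

open scoped ContDiff

private lemma smooth_deriv' {F : Type*} [NormedAddCommGroup F] [NormedSpace ℝ F]
    {h : ℝ → F} (hh : ContDiff ℝ ∞ h) : ContDiff ℝ ∞ (deriv h) :=
  (contDiff_infty_iff_deriv.mp hh).2

/-- Under the hypotheses of the CSS local parameterization, a singular point `γ s0`
(`γ' s0 = 0`) is an ordinary cusp (i.e. `det(γ''(s0), γ'''(s0)) ≠ 0`) iff
`det(f s0 - g (t s0), f'(s0)) ≠ 0` and `(κf/κg∘t)''(s0) ≠ 0`; the latter is, given the
first-order condition, equivalent to `κf''(s0)·κg(t s0)³ ≠ κg''(t s0)·κf(s0)³`. -/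
theorem stmt3 (f g : ℝ → ℝ × ℝ) (κf κg t : ℝ → ℝ) (γ : ℝ → ℝ × ℝ)
    (hf : ContDiff ℝ (⊤ : ℕ∞) f) (hg : ContDiff ℝ (⊤ : ℕ∞) g) (ht : ContDiff ℝ (⊤ : ℕ∞) t)
    (hκfs : ContDiff ℝ (⊤ : ℕ∞) κf) (hκgs : ContDiff ℝ (⊤ : ℕ∞) κg)
    (hfu : ∀ s, norm2 (deriv f s) = 1) (hgu : ∀ u, norm2 (deriv g u) = 1)
    (hfc : ∀ s, deriv (deriv f) s = κf s • J (deriv f s))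
    (hgc : ∀ u, deriv (deriv g) u = κg u • J (deriv g u))
    (hpar : ∀ s, deriv f s = - deriv g (t s))
    (ht' : ∀ s, deriv t s = κf s / κg (t s))
    (hκg0 : ∀ s, κg (t s) ≠ 0)
    (hsum : ∀ s, κf s + κg (t s) ≠ 0)
    (hchord : ∀ s, f s ≠ g (t s))
    (hγ : ∀ s, γ s = (κf s + κg (t s))⁻¹ • (κf s • f s + κg (t s) • g (t s)))
    (s0 : ℝ) (hsing : deriv γ s0 = 0) :
    (det2 (deriv (deriv γ) s0) (deriv (deriv (deriv γ)) s0) ≠ 0 ↔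
      (det2 (f s0 - g (t s0)) (deriv f s0) ≠ 0 ∧
        deriv (deriv (fun s => κf s / κg (t s))) s0 ≠ 0)) ∧
    (deriv (deriv (fun s => κf s / κg (t s))) s0 ≠ 0 ↔
      deriv (deriv κf) s0 * (κg (t s0)) ^ 3 ≠ deriv (deriv κg) (t s0) * (κf s0) ^ 3) := by
  -- ∞-smoothness
  have l1 : (∞ : WithTop ℕ∞) ≠ 0 := by simp
  have hf' : ContDiff ℝ ∞ f := hf.of_le (by simp)
  have hg' : ContDiff ℝ ∞ g := hg.of_le (by simp)
  have htt : ContDiff ℝ ∞ t := ht.of_le (by simp)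
  have hκf' : ContDiff ℝ ∞ κf := hκfs.of_le (by simp)
  have hκg' : ContDiff ℝ ∞ κg := hκgs.of_le (by simp)
  have hμ : ContDiff ℝ ∞ (fun s => κg (t s)) := hκg'.comp htt
  have hr : ContDiff ℝ ∞ (fun s => κf s / κg (t s)) := hκf'.div hμ hκg0
  have hr1 : ContDiff ℝ ∞ (deriv (fun s => κf s / κg (t s))) := smooth_deriv' hr
  have hD : ContDiff ℝ ∞ (fun s => κf s + κg (t s)) := hκf'.add hμ
  have hq : ContDiff ℝ ∞ (fun s => κg (t s) ^ 2 / (κf s + κg (t s)) ^ 2) :=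
    (hμ.pow 2).div (hD.pow 2) (fun s => pow_ne_zero 2 (hsum s))
  have hw : ContDiff ℝ ∞
      (fun s => κg (t s) ^ 2 / (κf s + κg (t s)) ^ 2 * deriv (fun u => κf u / κg (t u)) s) :=
    hq.mul hr1
  have he : ContDiff ℝ ∞ (deriv f) := smooth_deriv' hf'
  have hc1 : ContDiff ℝ ∞ (fun s => (1 + κf s / κg (t s)) • deriv f s) :=
    (contDiff_const.add hr).smul he
  -- pointwise derivatives
  have Hf : ∀ s, HasDerivAt f (deriv f s) s := fun s => (hf'.differentiable l1 s).hasDerivAt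
  have Hg : ∀ u, HasDerivAt g (deriv g u) u := fun u => (hg'.differentiable l1 u).hasDerivAt
  have Hκf : ∀ s, HasDerivAt κf (deriv κf s) s :=
    fun s => (hκf'.differentiable l1 s).hasDerivAt
  have Hκg : ∀ u, HasDerivAt κg (deriv κg u) u :=
    fun u => (hκg'.differentiable l1 u).hasDerivAt
  have Ht : ∀ s, HasDerivAt t (κf s / κg (t s)) s := fun s => by
    have h := (htt.differentiable l1 s).hasDerivAt
    rwa [ht' s] at h
  have hgt : ∀ s, deriv g (t s) = - deriv f s := fun s => by
    rw [hpar s, neg_neg]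
  have HG : ∀ s, HasDerivAt (fun u => g (t u)) (-((κf s / κg (t s)) • deriv f s)) s := fun s => by
    have h1 := (Hg (t s)).scomp s (Ht s)
    rw [hgt s] at h1
    simpa [Function.comp_def, smul_neg] using h1
  have Hμ : ∀ s, HasDerivAt (fun u => κg (t u)) (deriv κg (t s) * (κf s / κg (t s))) s :=
    fun s => by simpa [Function.comp_def] using (Hκg (t s)).comp s (Ht s)
  have Hr : ∀ s, HasDerivAt (fun u => κf u / κg (t u))
      ((deriv κf s * κg (t s) - κf s * (deriv κg (t s) * (κf s / κg (t s)))) / κg (t s) ^ 2) s :=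
    fun s => (Hκf s).div (Hμ s) (hκg0 s)
  have hrd : ∀ s, deriv (fun u => κf u / κg (t u)) s =
      (deriv κf s * κg (t s) - κf s * (deriv κg (t s) * (κf s / κg (t s)))) / κg (t s) ^ 2 :=
    fun s => (Hr s).deriv
  -- first derivative of γ
  have Hγfun : γ = fun s => (κf s + κg (t s))⁻¹ • (κf s • f s + κg (t s) • g (t s)) := funext hγ
  have Hγ : ∀ s, HasDerivAt γ
      ((κg (t s) ^ 2 / (κf s + κg (t s)) ^ 2 * deriv (fun u => κf u / κg (t u)) s) •
        (f s - g (t s))) s := fun s => by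
    have HD : HasDerivAt (fun u => κf u + κg (t u))
        (deriv κf s + deriv κg (t s) * (κf s / κg (t s))) s := (Hκf s).add (Hμ s)
    have HDinv := HD.inv (hsum s)
    have Hin : HasDerivAt (fun u => κf u • f u + κg (t u) • g (t u))
        ((κf s • deriv f s + deriv κf s • f s) +
          (κg (t s) • (-((κf s / κg (t s)) • deriv f s)) +
            (deriv κg (t s) * (κf s / κg (t s))) • g (t s))) s :=
      ((Hκf s).smul (Hf s)).add ((Hμ s).smul (HG s))
    have h0 := HDinv.smul Hin
    change HasDerivAt (fun s => (κf s + κg (t s))⁻¹ • (κf s • f s + κg (t s) • g (t s))) _ s at h0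
    simp only [Pi.inv_apply] at h0
    rw [← Hγfun] at h0
    convert h0 using 1
    rw [hrd s]
    have hb := hκg0 s
    have hab := hsum s
    match_scalars <;> field_simp <;> ring
  have hγ1 : deriv γ = fun s =>
      (κg (t s) ^ 2 / (κf s + κg (t s)) ^ 2 * deriv (fun u => κf u / κg (t u)) s) •
        (f s - g (t s)) := funext fun s => (Hγ s).deriv
  -- singularity: r'(s0) = 0
  have hc0 : f s0 - g (t s0) ≠ 0 := sub_ne_zero.mpr (hchord s0)
  have hq0 : κg (t s0) ^ 2 / (κf s0 + κg (t s0)) ^ 2 ≠ 0 :=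
    div_ne_zero (pow_ne_zero 2 (hκg0 s0)) (pow_ne_zero 2 (hsum s0))
  have hr'0 : deriv (fun u => κf u / κg (t u)) s0 = 0 := by
    rw [hγ1] at hsing
    rcases smul_eq_zero.mp hsing with h | h
    · rcases mul_eq_zero.mp h with h' | h'
      · exact absurd h' hq0
      · exact h'
    · exact absurd h hc0
  -- derivative of the chord
  have HC : ∀ s, HasDerivAt (fun u => f u - g (t u))
      ((1 + κf s / κg (t s)) • deriv f s) s := fun s => by
    have h := (Hf s).fun_sub (HG s)
    have e : (1 + κf s / κg (t s)) • deriv f s = deriv f s - -((κf s / κg (t s)) • deriv f s) := by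
      rw [sub_neg_eq_add, add_smul, one_smul]
    rw [e]
    exact h
  -- second derivative of γ
  have Hw : ∀ s, HasDerivAt
      (fun u => κg (t u) ^ 2 / (κf u + κg (t u)) ^ 2 * deriv (fun v => κf v / κg (t v)) u)
      (deriv (fun u => κg (t u) ^ 2 / (κf u + κg (t u)) ^ 2 *
        deriv (fun v => κf v / κg (t v)) u) s) s :=
    fun s => (hw.differentiable l1 s).hasDerivAt
  have Hγ2 : ∀ s, HasDerivAt (deriv γ)
      ((κg (t s) ^ 2 / (κf s + κg (t s)) ^ 2 * deriv (fun v => κf v / κg (t v)) s) •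
          ((1 + κf s / κg (t s)) • deriv f s) +
        deriv (fun u => κg (t u) ^ 2 / (κf u + κg (t u)) ^ 2 *
          deriv (fun v => κf v / κg (t v)) u) s • (f s - g (t s))) s := fun s => by
    rw [hγ1]
    exact (Hw s).smul (HC s)
  have hγ2 : deriv (deriv γ) = fun s =>
      (κg (t s) ^ 2 / (κf s + κg (t s)) ^ 2 * deriv (fun v => κf v / κg (t v)) s) •
          ((1 + κf s / κg (t s)) • deriv f s) +
        deriv (fun u => κg (t u) ^ 2 / (κf u + κg (t u)) ^ 2 *
          deriv (fun v => κf v / κg (t v)) u) s • (f s - g (t s)) :=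
    funext fun s => (Hγ2 s).deriv
  -- third derivative at s0
  have Hw2 : HasDerivAt (deriv (fun u => κg (t u) ^ 2 / (κf u + κg (t u)) ^ 2 *
      deriv (fun v => κf v / κg (t v)) u))
      (deriv (deriv (fun u => κg (t u) ^ 2 / (κf u + κg (t u)) ^ 2 *
        deriv (fun v => κf v / κg (t v)) u)) s0) s0 :=
    ((smooth_deriv' hw).differentiable l1 s0).hasDerivAt
  have Hc1 : HasDerivAt (fun u => (1 + κf u / κg (t u)) • deriv f u)
      (deriv (fun u => (1 + κf u / κg (t u)) • deriv f u) s0) s0 :=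
    (hc1.differentiable l1 s0).hasDerivAt
  have Hγ3 : HasDerivAt (deriv (deriv γ))
      (((κg (t s0) ^ 2 / (κf s0 + κg (t s0)) ^ 2 * deriv (fun v => κf v / κg (t v)) s0) •
          deriv (fun u => (1 + κf u / κg (t u)) • deriv f u) s0 +
        deriv (fun u => κg (t u) ^ 2 / (κf u + κg (t u)) ^ 2 *
          deriv (fun v => κf v / κg (t v)) u) s0 • ((1 + κf s0 / κg (t s0)) • deriv f s0)) +
        (deriv (fun u => κg (t u) ^ 2 / (κf u + κg (t u)) ^ 2 *
            deriv (fun v => κf v / κg (t v)) u) s0 • ((1 + κf s0 / κg (t s0)) • deriv f s0) +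
          deriv (deriv (fun u => κg (t u) ^ 2 / (κf u + κg (t u)) ^ 2 *
            deriv (fun v => κf v / κg (t v)) u)) s0 • (f s0 - g (t s0)))) s0 := by
    rw [hγ2]
    exact ((Hw s0).smul Hc1).add (Hw2.smul (HC s0))
  have hdd : deriv (deriv γ) s0 =
      deriv (fun u => κg (t u) ^ 2 / (κf u + κg (t u)) ^ 2 *
        deriv (fun v => κf v / κg (t v)) u) s0 • (f s0 - g (t s0)) := by
    rw [hγ2]
    simp only [hr'0, mul_zero, zero_smul, zero_add]
  have hddd : deriv (deriv (deriv γ)) s0 =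
      (2 * deriv (fun u => κg (t u) ^ 2 / (κf u + κg (t u)) ^ 2 *
        deriv (fun v => κf v / κg (t v)) u) s0) • ((1 + κf s0 / κg (t s0)) • deriv f s0) +
      deriv (deriv (fun u => κg (t u) ^ 2 / (κf u + κg (t u)) ^ 2 *
        deriv (fun v => κf v / κg (t v)) u)) s0 • (f s0 - g (t s0)) := by
    rw [Hγ3.deriv, hr'0]
    module
  -- A = q(s0) * r''(s0)
  have hA : deriv (fun u => κg (t u) ^ 2 / (κf u + κg (t u)) ^ 2 *
      deriv (fun v => κf v / κg (t v)) u) s0 =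
      κg (t s0) ^ 2 / (κf s0 + κg (t s0)) ^ 2 *
        deriv (deriv (fun v => κf v / κg (t v))) s0 := by
    have h := (((hq.differentiable l1 s0).hasDerivAt).mul
      ((hr1.differentiable l1 s0).hasDerivAt)).deriv
    rw [hr'0, mul_zero, zero_add] at h
    exact h
  set R := deriv (deriv (fun v => κf v / κg (t v))) s0 with hRdef
  have hdet : det2 (deriv (deriv γ) s0) (deriv (deriv (deriv γ)) s0) =
      2 * (1 + κf s0 / κg (t s0)) * (κg (t s0) ^ 2 / (κf s0 + κg (t s0)) ^ 2) ^ 2 * R ^ 2 *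
        det2 (f s0 - g (t s0)) (deriv f s0) := by
    rw [hdd, hddd, hA]
    simp only [det2, Prod.fst_add, Prod.snd_add, Prod.smul_fst, Prod.smul_snd, smul_eq_mul]
    ring
  have hρ : (1 + κf s0 / κg (t s0)) ≠ 0 := by
    have h : 1 + κf s0 / κg (t s0) = (κf s0 + κg (t s0)) / κg (t s0) := by
      field_simp [hκg0 s0]
      ring
    rw [h]
    exact div_ne_zero (hsum s0) (hκg0 s0)
  constructor
  · rw [hdet]
    constructor
    · intro h
      refine ⟨fun h0 => h (by rw [h0]; ring), fun h0 => h (by rw [h0]; ring)⟩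
    · rintro ⟨h1, h2⟩
      exact mul_ne_zero (mul_ne_zero (mul_ne_zero (mul_ne_zero two_ne_zero hρ)
        (pow_ne_zero 2 hq0)) (pow_ne_zero 2 h2)) h1
  -- second equivalence
  · have hN0 : deriv κf s0 * κg (t s0) - κf s0 * (deriv κg (t s0) * (κf s0 / κg (t s0))) = 0 := by
      have h := (hrd s0).symm
      rw [hr'0] at h
      exact (div_eq_zero_iff.mp h).resolve_right (pow_ne_zero 2 (hκg0 s0))
    have Hb't : HasDerivAt (fun s => deriv κg (t s))
        (deriv (deriv κg) (t s0) * (κf s0 / κg (t s0))) s0 := by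
      simpa [Function.comp_def] using
        (((smooth_deriv' hκg').differentiable l1 (t s0)).hasDerivAt).comp s0 (Ht s0)
    have Hrr : HasDerivAt (fun v => κf v / κg (t v)) 0 s0 := by
      have h := (hr.differentiable l1 s0).hasDerivAt
      rwa [hr'0] at h
    have HN : HasDerivAt (fun s => deriv κf s * κg (t s) -
        κf s * (deriv κg (t s) * (κf s / κg (t s))))
        ((deriv (deriv κf) s0 * κg (t s0) +
            deriv κf s0 * (deriv κg (t s0) * (κf s0 / κg (t s0)))) -
          (deriv κf s0 * (deriv κg (t s0) * (κf s0 / κg (t s0))) +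
            κf s0 * ((deriv (deriv κg) (t s0) * (κf s0 / κg (t s0))) * (κf s0 / κg (t s0)) +
              deriv κg (t s0) * 0))) s0 :=
      ((((smooth_deriv' hκf').differentiable l1 s0).hasDerivAt).mul (Hμ s0)).sub
        ((Hκf s0).mul (Hb't.mul Hrr))
    have Hpow : HasDerivAt (fun s => κg (t s) ^ 2)
        (2 * κg (t s0) ^ 1 * (deriv κg (t s0) * (κf s0 / κg (t s0)))) s0 := by
      simpa using (Hμ s0).fun_pow 2
    have HR : HasDerivAt (deriv (fun v => κf v / κg (t v)))
        ((((deriv (deriv κf) s0 * κg (t s0) +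
            deriv κf s0 * (deriv κg (t s0) * (κf s0 / κg (t s0)))) -
          (deriv κf s0 * (deriv κg (t s0) * (κf s0 / κg (t s0))) +
            κf s0 * ((deriv (deriv κg) (t s0) * (κf s0 / κg (t s0))) * (κf s0 / κg (t s0)) +
              deriv κg (t s0) * 0))) * κg (t s0) ^ 2 -
          (deriv κf s0 * κg (t s0) - κf s0 * (deriv κg (t s0) * (κf s0 / κg (t s0)))) *
            (2 * κg (t s0) ^ 1 * (deriv κg (t s0) * (κf s0 / κg (t s0))))) /
          (κg (t s0) ^ 2) ^ 2) s0 := by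
      rw [funext hrd]
      exact HN.div Hpow (pow_ne_zero 2 (hκg0 s0))
    have hRval : R = (deriv (deriv κf) s0 * κg (t s0) ^ 3 -
        deriv (deriv κg) (t s0) * κf s0 ^ 3) / κg (t s0) ^ 4 := by
      rw [hRdef, HR.deriv, hN0]
      have hb := hκg0 s0
      field_simp
      ring
    rw [hRval]
    rw [div_ne_zero_iff, and_iff_left (pow_ne_zero 4 (hκg0 s0)), sub_ne_zero]
end

section
/- Let q = γ(s0) be a regular point of the local parameterization γ of the Centre Symmetry Set at a standard pair a = f(s0), b = g(t(s0)). Then the signed curvature of γ at s0 equals sgn(κ_g(t(s0))) · (κ_f(s0)+κ_g(t(s0)))³ / |κ_g(t(s0))²κ_f'(s0) − κ_f(s0)²κ_g'(t(s0))| · det(a − b, f'(s0)) / |a − b|³. -/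
open Real Set

lemma norm2_smul (c : ℝ) (v : ℝ × ℝ) : norm2 (c • v) = |c| * norm2 v := by
  simp only [norm2, Prod.smul_fst, Prod.smul_snd, smul_eq_mul, mul_pow]
  rw [← mul_add, Real.sqrt_mul (sq_nonneg c), Real.sqrt_sq_eq_abs]

lemma norm2_pos (v : ℝ × ℝ) (h : v ≠ 0) : 0 < norm2 v := by
  apply Real.sqrt_pos.2
  have h' : v.1 ≠ 0 ∨ v.2 ≠ 0 := by
    by_contra hc
    push_neg at hc
    exact h (Prod.ext hc.1 hc.2)
  rcases h' with h1 | h2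
  · nlinarith [sq_nonneg v.2, sq_pos_of_ne_zero h1]
  · nlinarith [sq_nonneg v.1, sq_pos_of_ne_zero h2]

/-- The signed curvature `det(γ', γ'')/|γ'|³` of the natural local parameterization `γ` of
the Centre Symmetry Set at a regular point `γ s0` equals
`sgn(κg(t s0)) · (κf s0 + κg(t s0))³ / |κg(t s0)²κf'(s0) − κf(s0)²κg'(t s0)|
  · det(a − b, f'(s0)) / |a − b|³` where `a = f s0`, `b = g (t s0)`. -/
theorem stmt4 (f g : ℝ → ℝ × ℝ) (κf κg t : ℝ → ℝ) (γ : ℝ → ℝ × ℝ)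
    (hf : ContDiff ℝ (⊤ : ℕ∞) f) (hg : ContDiff ℝ (⊤ : ℕ∞) g) (ht : ContDiff ℝ (⊤ : ℕ∞) t)
    (hκfs : ContDiff ℝ (⊤ : ℕ∞) κf) (hκgs : ContDiff ℝ (⊤ : ℕ∞) κg)
    (hfu : ∀ s, norm2 (deriv f s) = 1) (hgu : ∀ u, norm2 (deriv g u) = 1)
    (hfc : ∀ s, deriv (deriv f) s = κf s • J (deriv f s))
    (hgc : ∀ u, deriv (deriv g) u = κg u • J (deriv g u))
    (hpar : ∀ s, deriv f s = - deriv g (t s))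
    (ht' : ∀ s, deriv t s = κf s / κg (t s))
    (hκg0 : ∀ s, κg (t s) ≠ 0)
    (hsum : ∀ s, κf s + κg (t s) ≠ 0)
    (hchord : ∀ s, f s ≠ g (t s))
    (hγ : ∀ s, γ s = (κf s + κg (t s))⁻¹ • (κf s • f s + κg (t s) • g (t s)))
    (s0 : ℝ) (hreg : deriv γ s0 ≠ 0)
    (hden : (κg (t s0)) ^ 2 * deriv κf s0 - (κf s0) ^ 2 * deriv κg (t s0) ≠ 0) :
    det2 (deriv γ s0) (deriv (deriv γ) s0) / (norm2 (deriv γ s0)) ^ 3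
      = Real.sign (κg (t s0)) *
        ((κf s0 + κg (t s0)) ^ 3 /
          |(κg (t s0)) ^ 2 * deriv κf s0 - (κf s0) ^ 2 * deriv κg (t s0)|) *
        (det2 (f s0 - g (t s0)) (deriv f s0) / (norm2 (f s0 - g (t s0))) ^ 3) := by
  -- differentiability
  have hfd : Differentiable ℝ f := hf.differentiable (by simp)
  have hgd : Differentiable ℝ g := hg.differentiable (by simp)
  have htd : Differentiable ℝ t := ht.differentiable (by simp)
  have hκfd : Differentiable ℝ κf := hκfs.differentiable (by simp)
  have hκgd : Differentiable ℝ κg := hκgs.differentiable (by simp)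
  have hdκf : ContDiff ℝ (↑(⊤:ℕ∞)) (deriv κf) := (contDiff_infty_iff_deriv.1 (hκfs.of_le (by simp))).2
  have hdκg : ContDiff ℝ (↑(⊤:ℕ∞)) (deriv κg) := (contDiff_infty_iff_deriv.1 (hκgs.of_le (by simp))).2
  -- abbreviations
  set w : ℝ → ℝ × ℝ := fun s => f s - g (t s) with hw_def
  set μ : ℝ → ℝ := fun s => κf s / (κf s + κg (t s)) with hμ_def
  set dμ : ℝ → ℝ := fun s =>
    ((κg (t s)) ^ 2 * deriv κf s - (κf s) ^ 2 * deriv κg (t s)) /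
      (κg (t s) * (κf s + κg (t s)) ^ 2) with hdμ_def
  -- derivative of g ∘ t
  have hgt : ∀ s, HasDerivAt (fun s => g (t s)) ((κf s / κg (t s)) • (- deriv f s)) s := by
    intro s
    have h1 := ((hgd (t s)).hasDerivAt).scomp s ((htd s).hasDerivAt)
    rw [ht' s] at h1
    have h2 : deriv g (t s) = - deriv f s := by rw [hpar s, neg_neg]
    rw [h2] at h1
    exact h1
  -- derivative of w
  have hwD : ∀ s, HasDerivAt w (((κf s + κg (t s)) / κg (t s)) • deriv f s) s := by
    intro s
    have h1 := ((hfd s).hasDerivAt).sub (hgt s)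
    refine h1.congr_deriv ?_
    match_scalars
    field_simp [hκg0 s]
    ring
  -- derivative of κg ∘ t
  have hκgt : ∀ s, HasDerivAt (fun s => κg (t s)) ((κf s / κg (t s)) * deriv κg (t s)) s := by
    intro s
    have h1 := ((hκgd (t s)).hasDerivAt).comp s ((htd s).hasDerivAt)
    rw [ht' s] at h1
    refine h1.congr_deriv ?_
    ring
  -- derivative of μ
  have hμD : ∀ s, HasDerivAt μ (dμ s) s := by
    intro s
    have hK : HasDerivAt (fun s => κf s + κg (t s))
        (deriv κf s + (κf s / κg (t s)) * deriv κg (t s)) s :=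
      ((hκfd s).hasDerivAt).add (hκgt s)
    have h1 := ((hκfd s).hasDerivAt).div hK (hsum s)
    refine h1.congr_deriv ?_
    rw [hdμ_def]
    field_simp [hκg0 s, hsum s]
    ring
  -- γ in convenient form
  have hγfun : γ = fun s => g (t s) + μ s • w s := by
    funext s
    rw [hγ s]
    have hK := hsum s
    simp only [hμ_def]
    match_scalars <;> field_simp <;> try ring
  -- first derivative of γ
  have hγ'at : ∀ s, HasDerivAt γ (dμ s • w s) s := by
    intro s
    rw [hγfun]
    have h1 := (hgt s).add (((hμD s).smul (hwD s)))
    refine h1.congr_deriv ?_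
    have hK := hsum s
    have hk2 := hκg0 s
    have : μ s • ((κf s + κg (t s)) / κg (t s)) • deriv f s
        = (κf s / κg (t s)) • deriv f s := by
      rw [smul_smul]
      congr 1
      rw [hμ_def]
      field_simp
    rw [this, smul_neg]
    abel
  have hγ' : ∀ s, deriv γ s = dμ s • w s := fun s => (hγ'at s).deriv
  -- dμ differentiable at s0
  have hκgtd : Differentiable ℝ (fun s => κg (t s)) := hκgd.comp htd
  have hdκgtd : Differentiable ℝ (fun s => deriv κg (t s)) :=
    (hdκg.differentiable (by simp)).comp htd
  have hdμdiff : DifferentiableAt ℝ dμ s0 := by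
    apply DifferentiableAt.div
    · exact (((hκgtd s0).pow 2).mul ((hdκf.differentiable (by simp)) s0)).sub
        (((hκfd s0).pow 2).mul (hdκgtd s0))
    · exact (hκgtd s0).mul (((hκfd s0).add (hκgtd s0)).pow 2)
    · exact mul_ne_zero (hκg0 s0) (pow_ne_zero 2 (hsum s0))
  -- second derivative of γ
  have hγ''at : HasDerivAt (deriv γ)
      (deriv dμ s0 • w s0 + dμ s0 • (((κf s0 + κg (t s0)) / κg (t s0)) • deriv f s0)) s0 := by
    have heq : deriv γ = fun s => dμ s • w s := funext hγ'
    rw [heq]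
    have h2 := (hdμdiff.hasDerivAt).smul (hwD s0)
    rwa [add_comm] at h2
  have hγ'' : deriv (deriv γ) s0
      = deriv dμ s0 • w s0 + dμ s0 • (((κf s0 + κg (t s0)) / κg (t s0)) • deriv f s0) :=
    hγ''at.deriv
  -- final scalar computation
  set k1 := κf s0
  set k2 := κg (t s0)
  set A := deriv κf s0
  set B := deriv κg (t s0)
  set D := k2 ^ 2 * A - k1 ^ 2 * B with hD_def
  have hm : dμ s0 = D / (k2 * (k1 + k2) ^ 2) := rfl
  set v := w s0 with hv_def
  have hvne : v ≠ 0 := sub_ne_zero.2 (hchord s0)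
  have hn : 0 < norm2 v := norm2_pos v hvne
  set n := norm2 v with hn_def
  set E := det2 v (deriv f s0) with hE_def
  have hK := hsum s0
  have hk2 : k2 ≠ 0 := hκg0 s0
  -- rewrite everything
  rw [hγ' s0, hγ'']
  rw [norm2_smul]
  have hdet : det2 (dμ s0 • v)
      (deriv dμ s0 • v + dμ s0 • (((k1 + k2) / k2) • deriv f s0))
      = (dμ s0) ^ 2 * ((k1 + k2) / k2) * E := by
    simp only [det2, hE_def, Prod.fst_add, Prod.snd_add, Prod.smul_fst, Prod.smul_snd,
      smul_eq_mul]
    ring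
  rw [hdet, hm]
  have habs : |D / (k2 * (k1 + k2) ^ 2)| = |D| / (|k2| * (k1 + k2) ^ 2) := by
    rw [abs_div, abs_mul, abs_pow, sq_abs]
  rw [habs]
  have hDne : D ≠ 0 := hden
  have hDpos : 0 < |D| := abs_pos.2 hDne
  have hsign : Real.sign k2 = |k2| / k2 := by
    rcases lt_or_gt_of_ne hk2 with h | h
    · rw [Real.sign_of_neg h, abs_of_neg h]
      field_simp
    · rw [Real.sign_of_pos h, abs_of_pos h]
      field_simp
  rw [hsign]
  have hk2abs : |k2| ≠ 0 := abs_ne_zero.2 hk2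
  have hnne : n ≠ 0 := ne_of_gt hn
  rw [← hv_def, ← hn_def]
  rcases lt_or_gt_of_ne hDne with hD1 | hD1 <;> rcases lt_or_gt_of_ne hk2 with h21 | h21
  · rw [abs_of_neg hD1, abs_of_neg h21]; field_simp
  · rw [abs_of_neg hD1, abs_of_pos h21]; field_simp
  · rw [abs_of_pos hD1, abs_of_neg h21]; field_simp
  · rw [abs_of_pos hD1, abs_of_pos h21]; field_simp
end

section
/- Let f : S¹ → ℝ² be unit speed with signed curvature κ never vanishing, and let t : ℝ → ℝ satisfy f'(s) = −f'(t(s)) (parallel-pair correspondence) and t'(s) = κ(s)/κ(t(s)). Define the secant caustic point σ(s) = f(s) − f(t(s)). Then σ'(s) = 0 if and only if κ(s) + κ(t(s)) = 0; that is, a parallel pair yields a singular point of the secant caustic exactly when it yields an asymptote of the Centre Symmetry Set. -/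
open Real Set

/-- For a unit-speed curve `f` with nonvanishing signed curvature `κ = det(f', f'')` and the
opposite-direction parallel-pair correspondence `t` (`f' = -f'∘t`, `t' = κ/κ∘t`), the
secant caustic point `σ(s) = f s - f (t s)` is singular (`σ'(s) = 0`) if and only if
`κ s + κ (t s) = 0`, i.e. exactly when the parallel pair yields an asymptote of the
Centre Symmetry Set. -/
theorem stmt19 (f : ℝ → ℝ × ℝ) (κ t : ℝ → ℝ) (s : ℝ)
    (hf : ContDiff ℝ (⊤ : ℕ∞) f) (ht : DifferentiableAt ℝ t s)
    (hunit : ∀ u, norm2 (deriv f u) = 1)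
    (hκ : ∀ u, κ u = det2 (deriv f u) (deriv (deriv f) u))
    (hκ0 : ∀ u, κ u ≠ 0)
    (hpar : ∀ u, deriv f u = - deriv f (t u))
    (ht' : ∀ u, deriv t u = κ u / κ (t u)) :
    deriv (fun u => f u - f (t u)) s = 0 ↔ κ s + κ (t s) = 0 := by
  have hfd : Differentiable ℝ f := hf.differentiable (by simp)
  have v := deriv f (t s)
  have hvne : deriv f (t s) ≠ 0 := by
    intro h
    have := hunit (t s)
    rw [h] at this
    simp [norm2] at this
  have hcomp : HasDerivAt (fun u => f (t u)) (deriv t s • deriv f (t s)) s :=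
    (hfd (t s)).hasDerivAt.scomp s ht.hasDerivAt
  have hsub : HasDerivAt (fun u => f u - f (t u))
      (deriv f s - deriv t s • deriv f (t s)) s :=
    (hfd s).hasDerivAt.sub hcomp
  rw [hsub.deriv]
  rw [hpar s, ht' s]
  have hκt : κ (t s) ≠ 0 := hκ0 (t s)
  have key : -deriv f (t s) - (κ s / κ (t s)) • deriv f (t s)
      = (-((κ s + κ (t s)) / κ (t s))) • deriv f (t s) := by
    have h1 : κ s / κ (t s) = (κ s + κ (t s)) / κ (t s) - 1 := by
      field_simp
      ring
    rw [h1]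
    module
  rw [key, smul_eq_zero]
  constructor
  · rintro (h | h)
    · field_simp at h
      linarith
    · exact absurd h hvne
  · intro h
    left
    rw [h]
    simp
end
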